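/- arXiv:1806.11280 — 3 statements merged into one kernel-verified Lean document; each statement's English description precedes it below -/
import Mathlib

section
/- Let r, a, b be positive integers and let x_1 < x_2 < ... < x_r be integers all greater than 1. If ∏_{j=1}^{r} (1 - 1/x_j) ≤ a/b < ∏_{j=1}^{r-1} (1 - 1/x_j), then a · ∏_{j=1}^{r} x_j ≤ (a+1)^{2^r} - (a+1)^{2^{r-1}}. -/
/-
Write `u = a + 1`; the proof is by strong induction on `r`. If a prefix `x₀, …, x_{m-1}` with
`0 < m < r` satisfies `a x₀ ⋯ x_{m-1} < u^{2^m}`, then the tail `x_m, …, x_{r-1}` satisfies the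
hypotheses with the fraction `a x₀ ⋯ x_{m-1} / (b (x₀ - 1) ⋯ (x_{m-1} - 1))`, and the bound for the
tail gives the bound for the whole sequence because `t ↦ t^{2N} - t^N` is increasing.

The product first drops below `a/(a+1) ≤ a/b` after some `m ≤ r` terms. If `m < r`, induction on
that prefix lets us split there, so we may assume `b = a + 1`. If `x₀ ≤ a + 2`, split after `x₀`.
Otherwise `x₀ = a + 1 + z` with `z ≥ 2`. With `B = ⌈(a+1)(a+z)/z⌉` the tail has to push the product
below `(B-1)/B`, first after `t + 1` terms, say. As `x_j ≥ x₀ + j`, this forces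
`x₀ ≤ (t+1)(B-1)`, whence the elementary inequality `z B^{2^{t+1}} ≤ u^{2^{t+2}}`. Induction on
those `t + 1` terms with the fraction `(B-1)/B`, together with `a x₀ ≤ z (B-1)`, gives
`a x₀ ⋯ x_{t+1} ≤ u^{2^{t+2}} - u^{2^{t+1}}`, and we split there.
-/

open Finset

theorem pow_two_pow_succ (c k : ℕ) : c ^ 2 ^ (k + 1) = (c ^ 2 ^ k) ^ 2 := by
  rw [pow_succ, pow_mul]

theorem add_le_sq_of_le {Q T C : ℕ} (h : Q + T ≤ T ^ 2) (hTC : T ≤ C) : Q + C ≤ C ^ 2 := by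
  obtain ⟨d, rfl⟩ := Nat.exists_eq_add_of_le hTC
  nlinarith [Nat.le_self_pow two_ne_zero d, Nat.zero_le (T * d)]

theorem mul_pow_le_pow_of_mul_le {z y w : ℕ} (n : ℕ) (hn : n ≠ 0) (h : z * y ≤ w) :
    z * y ^ n ≤ w ^ n :=
  calc z * y ^ n ≤ z ^ n * y ^ n := by gcongr; exact Nat.le_self_pow hn z
    _ = (z * y) ^ n := (mul_pow z y n).symm
    _ ≤ w ^ n := by gcongr

theorem add_le_sq_add_of_mul_sq_le {z Y X : ℕ} (h : z * Y ^ 2 ≤ X ^ 2) :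
    z * Y ^ 2 + X ≤ X ^ 2 + z * Y := by
  rcases le_total X (z * Y) with hX | hX
  · omega
  · obtain ⟨d, rfl⟩ := Nat.exists_eq_add_of_le hX
    have h1 : d ≤ d ^ 2 := Nat.le_self_pow two_ne_zero d
    have h2 : z * Y ^ 2 ≤ z ^ 2 * Y ^ 2 := by gcongr; exact Nat.le_self_pow two_ne_zero z
    nlinarith [Nat.zero_le (z * Y * d)]

theorem add_le_sq_of_le_mul {A P C Y X z : ℕ} (hC : 0 < C) (hA : A ≤ z * C)
    (hP : C * P + Y ≤ Y ^ 2) (hYX : z * Y ^ 2 ≤ X ^ 2) : A * P + X ≤ X ^ 2 := by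
  obtain ⟨f, hf⟩ := Nat.exists_eq_add_of_le (le_of_add_le_right hP)
  have hzf : z * f + X ≤ X ^ 2 := by
    have := add_le_sq_add_of_mul_sq_le hYX
    rw [hf] at this
    linarith
  refine Nat.le_of_mul_le_mul_left ?_ hC
  calc C * (A * P + X) = A * (C * P) + C * X := by ring
    _ ≤ (z * C) * f + C * X := by gcongr; omega
    _ = C * (z * f + X) := by ring
    _ ≤ C * X ^ 2 := by gcongr

theorem exists_le_mul_lt_add (n : ℕ) {z : ℕ} (hz : 0 < z) : ∃ B, n ≤ z * B ∧ z * B < n + z := by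
  have h1 := Nat.div_add_mod (n + z - 1) z
  have h2 := Nat.mod_lt (n + z - 1) hz
  exact ⟨(n + z - 1) / z, by omega, by omega⟩

section CeilBound

-- The hypothesis `z * B < (a + 1) * (a + z) + z` says `B ≤ ⌈(a + 1) * (a + z) / z⌉`.
variable {a z B : ℕ}

theorem mul_sq_le_of_add_two_le (hz : 2 ≤ z) (hBu : z * B < (a + 1) * (a + z) + z)
    (hB : a + z + 2 ≤ B) : z * B ^ 2 ≤ (a + 1) ^ 4 := by
  rcases hz.eq_or_lt with rfl | hz3
  · -- `(a + 1) * (a + 2)` is even, so the strict bound on `2 * B` improves by one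
    have hpar : 2 * B ≤ (a + 1) * (a + 2) := by
      obtain ⟨k, hk⟩ := Nat.even_mul_succ_self (a + 1)
      generalize (a + 1) * (a + 1 + 1) = n at hk hBu ⊢
      omega
    have ha : 2 ≤ a := by nlinarith
    nlinarith
  · have hza : z + 1 ≤ a + 1 := by nlinarith
    have key : ((a + 1) * (a + z) + z) ^ 2 ≤ z * (a + 1) ^ 4 := by
      rcases Nat.lt_or_ge z 4 with h3 | hz4
      · obtain rfl : z = 3 := by omega
        zify
        nlinarith
      · have h1 : (a + 1) * (a + z) + z ≤ 2 * (a + 1) ^ 2 := by nlinarith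
        calc ((a + 1) * (a + z) + z) ^ 2 ≤ (2 * (a + 1) ^ 2) ^ 2 := Nat.pow_le_pow_left h1 2
          _ = 4 * (a + 1) ^ 4 := by ring
          _ ≤ z * (a + 1) ^ 4 := by gcongr
    have hsq : (z * B) ^ 2 ≤ ((a + 1) * (a + z) + z) ^ 2 := Nat.pow_le_pow_left hBu.le 2
    have : z * (z * B ^ 2) ≤ z * (a + 1) ^ 4 := by nlinarith
    exact Nat.le_of_mul_le_mul_left this (by omega)

theorem le_two_mul_add_one (hBu : z * B < (a + 1) * (a + z) + z) (hB : B ≤ a + 1 + z) :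
    B ≤ 2 * a + 1 := by
  by_contra! h
  nlinarith

theorem three_mul_pow_four_le (ha : 1 ≤ a) (hB : B ≤ 2 * a + 1) : 3 * a * B ^ 4 ≤ (a + 1) ^ 8 := by
  calc 3 * a * B ^ 4 ≤ 3 * a * (2 * a + 1) ^ 4 := by gcongr
    _ ≤ (a + 1) ^ 8 := by
      obtain ⟨c, rfl⟩ := Nat.exists_eq_add_of_le ha
      ring_nf
      nlinarith [Nat.zero_le (c ^ 5), Nat.zero_le (c ^ 6), Nat.zero_le (c ^ 7), Nat.zero_le (c ^ 8)]

theorem mul_pow_two_pow_le (ha : 1 ≤ a) (hB : B ≤ 2 * a + 1) {t : ℕ} (ht : 1 ≤ t) :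
    a * (2 * t + 1) * B ^ 2 ^ (t + 1) ≤ (a + 1) ^ 2 ^ (t + 2) := by
  induction t, ht using Nat.le_induction with
  | base => simpa [mul_comm 3 a] using three_mul_pow_four_le ha hB
  | succ t ht ih =>
    have hc : a * (2 * (t + 1) + 1) ≤ (a * (2 * t + 1)) ^ 2 :=
      calc a * (2 * (t + 1) + 1) ≤ a * (2 * t + 1) ^ 2 := by gcongr; nlinarith
        _ ≤ a ^ 2 * (2 * t + 1) ^ 2 := by gcongr; nlinarith
        _ = (a * (2 * t + 1)) ^ 2 := by ring
    calc a * (2 * (t + 1) + 1) * B ^ 2 ^ (t + 1 + 1)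
        ≤ (a * (2 * t + 1)) ^ 2 * (B ^ 2 ^ (t + 1)) ^ 2 := by
          rw [← pow_mul, ← pow_succ]; gcongr
      _ = (a * (2 * t + 1) * B ^ 2 ^ (t + 1)) ^ 2 := by ring
      _ ≤ ((a + 1) ^ 2 ^ (t + 2)) ^ 2 := by gcongr
      _ = (a + 1) ^ 2 ^ (t + 1 + 2) := by rw [← pow_mul, ← pow_succ]

theorem mul_pow_two_pow_le_of_le_mul {t : ℕ} (ha : 1 ≤ a) (hz : 2 ≤ z)
    (hBu : z * B < (a + 1) * (a + z) + z) (hroom : a + 1 + z ≤ (t + 1) * (B - 1)) :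
    z * B ^ 2 ^ (t + 1) ≤ (a + 1) ^ 2 ^ (t + 2) := by
  rcases le_or_gt (a + z + 2) B with hB | hB
  · have := mul_pow_le_pow_of_mul_le (2 ^ t) (by positivity) (mul_sq_le_of_add_two_le hz hBu hB)
    rwa [← pow_mul, ← pow_mul, ← pow_succ', show 4 = 2 ^ 2 by rfl, ← pow_add, add_comm 2] at this
  · have hB' := le_two_mul_add_one hBu (by omega)
    have ht : 1 ≤ t := by
      by_contra! h0
      simp only [Nat.lt_one_iff.1 h0] at hroom
      omega
    have hzt : z ≤ a * (2 * t + 1) := by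
      have : (t + 1) * (B - 1) ≤ (t + 1) * (2 * a) := Nat.mul_le_mul_left _ (by omega)
      nlinarith
    calc z * B ^ 2 ^ (t + 1) ≤ a * (2 * t + 1) * B ^ 2 ^ (t + 1) := by gcongr
      _ ≤ (a + 1) ^ 2 ^ (t + 2) := mul_pow_two_pow_le ha hB' ht

end CeilBound

theorem prod_sub_one_le_prod (x : ℕ → ℕ) (r : ℕ) :
    ∏ j ∈ range r, (x j - 1) ≤ ∏ j ∈ range r, x j :=
  prod_le_prod' fun _ _ => Nat.sub_le _ _

theorem mul_prod_le_add_mul_prod_sub_one {c n : ℕ} {y : ℕ → ℕ} (hy : ∀ j < n, c + j < y j) :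
    c * ∏ j ∈ range n, y j ≤ (c + n) * ∏ j ∈ range n, (y j - 1) := by
  induction n with
  | zero => simp
  | succ n ih =>
    have hn := hy n (by omega)
    have hstep : (c + n) * y n ≤ (c + (n + 1)) * (y n - 1) := by
      zify [show 1 ≤ y n by omega]
      nlinarith
    calc c * ∏ j ∈ range (n + 1), y j = (c * ∏ j ∈ range n, y j) * y n := by
          rw [prod_range_succ, mul_assoc]
      _ ≤ ((c + n) * ∏ j ∈ range n, (y j - 1)) * y n :=
          Nat.mul_le_mul_right _ (ih fun j hj => hy j (by omega))
      _ = (c + n) * y n * ∏ j ∈ range n, (y j - 1) := by ring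
      _ ≤ (c + (n + 1)) * (y n - 1) * ∏ j ∈ range n, (y j - 1) := Nat.mul_le_mul_right _ hstep
      _ = (c + (n + 1)) * ∏ j ∈ range (n + 1), (y j - 1) := by rw [prod_range_succ]; ring

/-- `∏_{j<m} (1 - 1/x j) ≤ a/b`, with the denominators cleared. -/
def ProdLE (a b : ℕ) (x : ℕ → ℕ) (m : ℕ) : Prop :=
  b * ∏ j ∈ range m, (x j - 1) ≤ a * ∏ j ∈ range m, x j

theorem prodLE_zero {a b : ℕ} {x : ℕ → ℕ} : ProdLE a b x 0 ↔ b ≤ a := by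
  simp [ProdLE]

theorem prodLE_add {a b m n : ℕ} {x : ℕ → ℕ} :
    ProdLE a b x (m + n) ↔
      ProdLE (a * ∏ j ∈ range m, x j) (b * ∏ j ∈ range m, (x j - 1)) (fun j => x (m + j)) n := by
  simp only [ProdLE, prod_range_add, mul_assoc]

theorem ProdLE.of_mul_le {a b a' b' m : ℕ} {x : ℕ → ℕ} (h : ProdLE a b x m) (ha : 0 < a)
    (hab : b' * a ≤ a' * b) : ProdLE a' b' x m := by
  refine Nat.le_of_mul_le_mul_left ?_ ha
  calc a * (b' * ∏ j ∈ range m, (x j - 1)) = b' * a * ∏ j ∈ range m, (x j - 1) := by ring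
    _ ≤ a' * b * ∏ j ∈ range m, (x j - 1) := by gcongr
    _ = a' * (b * ∏ j ∈ range m, (x j - 1)) := by ring
    _ ≤ a' * (a * ∏ j ∈ range m, x j) := Nat.mul_le_mul_left _ h
    _ = a * (a' * ∏ j ∈ range m, x j) := by ring

theorem prod_one_sub_inv_le_div_iff {a b m : ℕ} {x : ℕ → ℕ} (hb : 0 < b) (hx : ∀ j < m, 0 < x j) :
    ∏ j ∈ range m, (1 - 1 / (x j : ℚ)) ≤ a / b ↔ ProdLE a b x m := by
  have hprod : ∏ j ∈ range m, (1 - 1 / (x j : ℚ)) =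
      ((∏ j ∈ range m, (x j - 1) : ℕ) : ℚ) / ((∏ j ∈ range m, x j : ℕ) : ℚ) := by
    rw [Nat.cast_prod, Nat.cast_prod, ← prod_div_distrib]
    refine prod_congr rfl fun j hj => ?_
    have hj := hx j (mem_range.1 hj)
    rw [Nat.cast_sub hj]
    field_simp
    simp
  have hP : (0 : ℚ) < ((∏ j ∈ range m, x j : ℕ) : ℚ) := by
    exact_mod_cast prod_pos fun j hj => hx j (mem_range.1 hj)
  rw [hprod, div_le_div_iff₀ hP (by exact_mod_cast hb), ProdLE, mul_comm b]
  norm_cast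

theorem le_mul_of_prodLE {c B n : ℕ} {y : ℕ → ℕ} (hy : ∀ j < n, c + j < y j) (hB : 0 < B)
    (h : ProdLE (B - 1) B y n) : c ≤ n * (B - 1) := by
  rcases Nat.eq_zero_or_pos c with rfl | hc
  · exact Nat.zero_le _
  have hQ : 0 < ∏ j ∈ range n, (y j - 1) :=
    prod_pos fun j hj => by have := hy j (mem_range.1 hj); omega
  have key : c * B ≤ (B - 1) * (c + n) := by
    refine Nat.le_of_mul_le_mul_right ?_ hQ
    calc c * B * ∏ j ∈ range n, (y j - 1) = c * (B * ∏ j ∈ range n, (y j - 1)) := by ring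
      _ ≤ c * ((B - 1) * ∏ j ∈ range n, y j) := Nat.mul_le_mul_left _ h
      _ = (B - 1) * (c * ∏ j ∈ range n, y j) := by ring
      _ ≤ (B - 1) * ((c + n) * ∏ j ∈ range n, (y j - 1)) :=
          Nat.mul_le_mul_left _ (mul_prod_le_add_mul_prod_sub_one hy)
      _ = (B - 1) * (c + n) * ∏ j ∈ range n, (y j - 1) := by ring
  obtain ⟨C, rfl⟩ : ∃ C, B = C + 1 := ⟨B - 1, by omega⟩
  simp only [Nat.add_sub_cancel] at key ⊢
  nlinarith

structure IsIncreasingSeq (x : ℕ → ℕ) (r : ℕ) : Prop where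
  one_lt : ∀ j < r, 1 < x j
  lt_of_lt : ∀ i j, i < j → j < r → x i < x j

namespace IsIncreasingSeq

variable {x : ℕ → ℕ} {m n r : ℕ}

theorem mono (h : IsIncreasingSeq x r) (hm : m ≤ r) : IsIncreasingSeq x m :=
  ⟨fun j hj => h.one_lt j (by omega), fun i j hij hj => h.lt_of_lt i j hij (by omega)⟩

theorem shift (h : IsIncreasingSeq x (m + n)) : IsIncreasingSeq (fun j => x (m + j)) n :=
  ⟨fun j hj => h.one_lt (m + j) (by omega),
    fun i j hij hj => h.lt_of_lt (m + i) (m + j) (by omega) (by omega)⟩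

theorem add_le (h : IsIncreasingSeq x r) : ∀ j < r, x 0 + j ≤ x j
  | 0, _ => le_rfl
  | j + 1, hj => by
    have := h.add_le j (by omega)
    have := h.lt_of_lt j (j + 1) (by omega) hj
    omega

theorem prod_sub_one_pos (h : IsIncreasingSeq x r) : 0 < ∏ j ∈ range r, (x j - 1) :=
  prod_pos fun j hj => by have := h.one_lt j (mem_range.1 hj); omega

end IsIncreasingSeq

structure NielsenHyp (a b : ℕ) (x : ℕ → ℕ) (r : ℕ) : Prop extends IsIncreasingSeq x r where
  prodLE : ProdLE a b x r
  not_prodLE : ¬ ProdLE a b x (r - 1)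

def NielsenBound (a : ℕ) (x : ℕ → ℕ) (r : ℕ) : Prop :=
  a * ∏ j ∈ range r, x j + (a + 1) ^ 2 ^ (r - 1) ≤ (a + 1) ^ 2 ^ r

theorem NielsenBound.lt_pow {a r : ℕ} {x : ℕ → ℕ} (h : NielsenBound a x r) :
    a * ∏ j ∈ range r, x j < (a + 1) ^ 2 ^ r := by
  have := Nat.one_le_pow (2 ^ (r - 1)) (a + 1) (by omega)
  unfold NielsenBound at h
  omega

namespace NielsenHyp

variable {a b m n r : ℕ} {x : ℕ → ℕ}

theorem num_lt_den (h : NielsenHyp a b x r) : a < b := by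
  have hlt := not_le.1 h.not_prodLE
  refine Nat.lt_of_mul_lt_mul_right (a := ∏ j ∈ range (r - 1), x j) ?_
  calc a * _ < b * ∏ j ∈ range (r - 1), (x j - 1) := hlt
    _ ≤ b * ∏ j ∈ range (r - 1), x j := Nat.mul_le_mul_left _ (prod_sub_one_le_prod x _)

theorem num_pos (h : NielsenHyp a b x r) : 0 < a := by
  have hb : 0 < b := by have := h.num_lt_den; omega
  have := h.prodLE
  unfold ProdLE at this
  have := Nat.mul_pos hb h.prod_sub_one_pos
  exact Nat.pos_of_mul_pos_right (by omega : 0 < a * ∏ j ∈ range r, x j)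

theorem len_pos (h : NielsenHyp a b x r) : 0 < r := by
  by_contra! h0
  have := h.prodLE
  rw [Nat.le_zero.1 h0, prodLE_zero] at this
  exact absurd h.num_lt_den (not_lt.2 this)

theorem shift (h : NielsenHyp a b x (m + n)) (hn : 0 < n) :
    NielsenHyp (a * ∏ j ∈ range m, x j) (b * ∏ j ∈ range m, (x j - 1)) (fun j => x (m + j)) n where
  toIsIncreasingSeq := h.toIsIncreasingSeq.shift
  prodLE := prodLE_add.1 h.prodLE
  not_prodLE := by
    rw [← prodLE_add, show m + (n - 1) = m + n - 1 by omega]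
    exact h.not_prodLE

end NielsenHyp

theorem IsIncreasingSeq.exists_nielsenHyp {a b r : ℕ} {x : ℕ → ℕ} (hx : IsIncreasingSeq x r)
    (hle : ProdLE a b x r) (hab : a < b) : ∃ m ≤ r, NielsenHyp a b x m := by
  classical
  have hex : ∃ m, ProdLE a b x m := ⟨r, hle⟩
  have hmr : Nat.find hex ≤ r := Nat.find_min' hex hle
  have hm0 : 0 < Nat.find hex := by
    by_contra! h0
    have := Nat.find_spec hex
    rw [Nat.le_zero.1 h0, prodLE_zero] at this
    omega
  exact ⟨Nat.find hex, hmr, hx.mono hmr, Nat.find_spec hex, Nat.find_min hex (by omega)⟩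

namespace NielsenHyp

variable {a b m n r : ℕ} {x : ℕ → ℕ}

theorem nielsenBound_of_prefix (h : NielsenHyp a b x (m + n)) (hn : 0 < n)
    (ih : ∀ {a b : ℕ}, NielsenHyp a b (fun j => x (m + j)) n →
      NielsenBound a (fun j => x (m + j)) n)
    (hlt : a * ∏ j ∈ range m, x j < (a + 1) ^ 2 ^ m) : NielsenBound a x (m + n) := by
  obtain ⟨k, rfl⟩ : ∃ k, n = k + 1 := ⟨n - 1, by omega⟩
  have htail := ih (h.shift hn)
  rw [NielsenBound, Nat.add_sub_cancel, pow_two_pow_succ] at htail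
  have hlift := add_le_sq_of_le htail (Nat.pow_le_pow_left hlt (2 ^ k))
  rw [← pow_mul, ← pow_add, mul_assoc, ← prod_range_add] at hlift
  rwa [NielsenBound, show m + (k + 1) - 1 = m + k by omega, ← add_assoc, pow_two_pow_succ]

theorem nielsenBound_one (h : NielsenHyp a b x 1) : NielsenBound a x 1 := by
  have hle := h.prodLE
  have hab := h.num_lt_den
  have hx0 := h.one_lt 0 one_pos
  simp only [ProdLE, prod_range_one] at hle
  have : (a + 1) * (x 0 - 1) ≤ a * x 0 := le_trans (Nat.mul_le_mul_right _ hab) hle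
  have : x 0 ≤ a + 1 := by
    obtain ⟨w, hw⟩ : ∃ w, x 0 = w + 1 := ⟨x 0 - 1, by omega⟩
    rw [hw, Nat.add_sub_cancel] at this
    nlinarith
  simp only [NielsenBound, prod_range_one, Nat.sub_self, pow_zero, pow_one]
  nlinarith

theorem exists_nielsenBound_of_add_two_lt (h : NielsenHyp a (a + 1) x r) (hr : 1 < r)
    (hx0 : a + 2 < x 0)
    (ih : ∀ n < r, ∀ {a b : ℕ} {y : ℕ → ℕ}, NielsenHyp a b y n → NielsenBound a y n) :
    ∃ n, 1 < n ∧ n ≤ r ∧ NielsenBound a x n := by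
  obtain ⟨r, rfl⟩ : ∃ r', r = 1 + r' := ⟨r - 1, by omega⟩
  have ha := h.num_pos
  obtain ⟨z, hz⟩ : ∃ z, x 0 = a + 1 + z := ⟨x 0 - (a + 1), by omega⟩
  obtain ⟨B, hBl, hBu⟩ := exists_le_mul_lt_add ((a + 1) * (a + z)) (by omega : 0 < z)
  have hB : 0 < B := Nat.pos_of_mul_pos_left (lt_of_lt_of_le (by positivity) hBl)
  obtain ⟨C, rfl⟩ : ∃ C, B = C + 1 := ⟨B - 1, by omega⟩
  have hC : 0 < C := by nlinarith
  have htail := h.shift (m := 1) (by omega)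
  simp only [prod_range_one] at htail
  -- `a x₀ / ((a + 1)(x₀ - 1)) ≤ C / (C + 1)` amounts to `(a + 1)(a + z) ≤ z (C + 1)`
  have hCtail : ProdLE C (C + 1) (fun j => x (1 + j)) r := by
    refine htail.prodLE.of_mul_le (Nat.mul_pos ha (by omega)) ?_
    rw [hz, show a + 1 + z - 1 = a + z by omega]
    nlinarith
  obtain ⟨n, hnr, hn⟩ := htail.toIsIncreasingSeq.exists_nielsenHyp hCtail (by omega)
  obtain ⟨t, rfl⟩ : ∃ t, n = t + 1 := ⟨n - 1, by have := hn.len_pos; omega⟩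
  have hx : ∀ j < t + 1, x 0 + j < x (1 + j) := fun j hj =>
    (h.add_le j (by omega)).trans_lt (h.lt_of_lt j (1 + j) (by omega) (by omega))
  have hroom : x 0 ≤ (t + 1) * C := le_mul_of_prodLE hx (by omega) hn.prodLE
  have hnum := mul_pow_two_pow_le_of_le_mul ha (by omega : 2 ≤ z) hBu (by simpa [← hz] using hroom)
  have hIH := ih (t + 1) (by omega) hn
  rw [NielsenBound, Nat.add_sub_cancel, pow_two_pow_succ] at hIH
  refine ⟨1 + (t + 1), by omega, by omega, ?_⟩
  rw [NielsenBound, prod_range_add, prod_range_one, ← mul_assoc,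
    show 1 + (t + 1) - 1 = t + 1 by omega, show 1 + (t + 1) = t + 1 + 1 by omega,
    pow_two_pow_succ (a + 1) (t + 1)]
  rw [pow_two_pow_succ (C + 1), pow_two_pow_succ (a + 1) (t + 1)] at hnum
  refine add_le_sq_of_le_mul hC ?_ hIH hnum
  rw [hz]
  nlinarith

theorem nielsenBound_of_den_succ (h : NielsenHyp a (a + 1) x r)
    (ih : ∀ n < r, ∀ {a b : ℕ} {y : ℕ → ℕ}, NielsenHyp a b y n → NielsenBound a y n) :
    NielsenBound a x r := by
  obtain ⟨r, rfl⟩ : ∃ r', r = 1 + r' := ⟨r - 1, by have := h.len_pos; omega⟩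
  rcases Nat.eq_zero_or_pos r with rfl | hr
  · exact h.nielsenBound_one
  by_cases hx0 : x 0 ≤ a + 2
  · refine h.nielsenBound_of_prefix hr (ih r (by omega)) ?_
    rw [prod_range_one, pow_one]
    nlinarith
  obtain ⟨n, hn1, hnr, hn⟩ := h.exists_nielsenBound_of_add_two_lt (by omega) (by omega) ih
  rcases hnr.lt_or_eq with hnr | rfl
  · obtain ⟨k, hk⟩ : ∃ k, 1 + r = n + (k + 1) := ⟨r - n, by omega⟩
    rw [hk] at h ⊢
    exact h.nielsenBound_of_prefix (by omega) (ih (k + 1) (by omega)) hn.lt_pow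
  · exact hn

theorem nielsenBound (h : NielsenHyp a b x r) : NielsenBound a x r := by
  induction r using Nat.strong_induction_on generalizing a b x with
  | _ r ih =>
  have hle : ProdLE a (a + 1) x r :=
    h.prodLE.of_mul_le h.num_pos (by rw [mul_comm]; exact Nat.mul_le_mul_left a h.num_lt_den)
  obtain ⟨m, hmr, hm⟩ := h.toIsIncreasingSeq.exists_nielsenHyp hle (Nat.lt_succ_self a)
  rcases hmr.lt_or_eq with hmr | rfl
  · obtain ⟨n, rfl⟩ := Nat.exists_eq_add_of_le hmr.le
    have := hm.len_pos
    exact h.nielsenBound_of_prefix (by omega) (ih n (by omega)) (ih m hmr hm).lt_pow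
  · exact hm.nielsenBound_of_den_succ ih

end NielsenHyp

theorem nielsen_lemma_general (r a b : ℕ) (hb : 0 < b)
    (x : ℕ → ℕ) (hx1 : ∀ j < r, 1 < x j)
    (hmono : ∀ i j, i < j → j < r → x i < x j)
    (h1 : ∏ j ∈ Finset.range r, (1 - 1 / (x j : ℚ)) ≤ (a : ℚ) / b)
    (h2 : (a : ℚ) / b < ∏ j ∈ Finset.range (r - 1), (1 - 1 / (x j : ℚ))) :
    a * ∏ j ∈ Finset.range r, x j ≤ (a + 1) ^ (2 ^ r) - (a + 1) ^ (2 ^ (r - 1)) := by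
  have h : NielsenHyp a b x r :=
    { toIsIncreasingSeq := ⟨hx1, hmono⟩
      prodLE := (prod_one_sub_inv_le_div_iff hb fun j hj => by have := hx1 j hj; omega).1 h1
      not_prodLE := fun hle => h2.not_ge <|
        (prod_one_sub_inv_le_div_iff hb fun j hj => by have := hx1 j (by omega); omega).2 hle }
  have := h.nielsenBound
  unfold NielsenBound at this
  omega

theorem nielsen_lemma (r a b : ℕ) (hr : 0 < r) (ha : 0 < a) (hb : 0 < b)
    (x : ℕ → ℕ) (hx1 : ∀ j < r, 1 < x j)
    (hmono : ∀ i j, i < j → j < r → x i < x j)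
    (h1 : ∏ j ∈ Finset.range r, (1 - 1 / (x j : ℚ)) ≤ (a : ℚ) / b)
    (h2 : (a : ℚ) / b < ∏ j ∈ Finset.range (r - 1), (1 - 1 / (x j : ℚ))) :
    a * ∏ j ∈ Finset.range r, x j ≤ (a + 1) ^ (2 ^ r) - (a + 1) ^ (2 ^ (r - 1)) :=
  nielsen_lemma_general r a b hb x hx1 hmono h1 h2
end

section
/- Fix a real number L ≥ 1. There are only finitely many pairs (g, n) of positive integers with g ≥ 2 even, ν₂(g) ≤ L, and (g^n - 1)/(g - 1) a composite number whose Euler totient divides (g^n - 1)/(g - 1) - 1. -/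
/-!
A Lehmer number `m` is squarefree, since a prime `p` with `p² ∣ m` divides both `m` and
`φ m ∣ m - 1`. When `m` is odd, each of its `ω` prime factors contributes a factor `2` to `φ m`,
so `2 ^ ω ∣ m - 1`. For the repunit `m = 1 + g + ⋯ + g ^ (n - 1)` with `g` even,
`m - 1 = g (1 + g + ⋯ + g ^ (n - 2))` with odd cofactor, hence `ω ≤ ν₂ g ≤ L`.

A composite Lehmer number is bounded in terms of `ω` alone. Write `m - 1 = d φ m`, so that
`∏ p = d ∏ (p - 1) + 1` over the prime factors, with `2 ≤ d < 2 ^ ω`. If `T` is a set of smallest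
prime factors and `q` the next one, put `A = ∏_T p`, `B = ∏_T (p - 1)` and `x`, `y` the same
products over the remaining `s` primes. Then `A x = d B y + 1` and `y < x` force `A < d B`, while
`x / y ≤ (q / (q - 1)) ^ s`; together they give `q < d B s ≤ d ω A`. Adding the primes one at a
time yields `m ≤ (d ω) ^ 2 ^ ω`, and `g, n ≤ m` leaves finitely many pairs.
-/

open Finset

namespace Nat

theorem squarefree_of_totient_dvd_sub_one {m : ℕ} (hm : m ≠ 0) (h : φ m ∣ m - 1) :
    Squarefree m := by
  refine squarefree_iff_prime_squarefree.mpr fun p hp hpp => hp.one_lt.ne' ?_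
  have hp_totient : p ∣ φ (p * p) := by
    rw [← sq, totient_prime_pow hp two_pos]
    exact dvd_mul_of_dvd_left (by simp) _
  have hp_sub : p ∣ m - 1 := hp_totient.trans ((totient_dvd_of_dvd hpp).trans h)
  have hp_m : p ∣ m := (dvd_mul_right p p).trans hpp
  simpa [Nat.sub_sub_self (one_le_iff_ne_zero.mpr hm)] using Nat.dvd_sub hp_m hp_sub

theorem totient_eq_prod_primeFactors_sub_one {m : ℕ} (hm : Squarefree m) :
    φ m = ∏ p ∈ m.primeFactors, (p - 1) := by
  have h := totient_mul_prod_primeFactors m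
  rw [prod_primeFactors_of_squarefree hm, mul_comm (φ m)] at h
  exact Nat.eq_of_mul_eq_mul_left (pos_of_ne_zero hm.ne_zero) h

theorem two_pow_card_primeFactors_dvd_totient {m : ℕ} (hm : Odd m) :
    2 ^ #m.primeFactors ∣ φ m := by
  rw [totient_eq_prod_factorization hm.pos.ne', Finsupp.prod, support_factorization,
    ← prod_const]
  refine prod_dvd_prod_of_dvd _ _ fun p hp => Dvd.dvd.mul_left ?_ _
  have hp_odd : Odd p := hm.of_dvd_nat (dvd_of_mem_primeFactors hp)
  exact (Nat.Odd.sub_odd hp_odd odd_one).two_dvd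

theorem pow_le_sub_one_pow_add (q s : ℕ) : q ^ s ≤ (q - 1) ^ s + s * q ^ (s - 1) := by
  rcases q.eq_zero_or_pos with rfl | hq
  · simp
  have hq' : (1 : ℤ) ≤ q := by exact_mod_cast hq
  have h := abs_pow_sub_pow_le (q : ℤ) (q - 1) s
  rw [sub_sub_cancel, abs_one, one_mul, Nat.abs_cast,
    max_eq_left (abs_le.mpr ⟨by linarith, by linarith⟩)] at h
  zify [hq]
  linarith [le_abs_self ((q : ℤ) ^ s - (q - 1) ^ s)]

section LehmerEquation

variable {F : Finset ℕ} {d : ℕ}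

theorem lt_two_pow_card_of_prod_eq (hF : ∀ p ∈ F, 2 ≤ p)
    (hprod : ∏ p ∈ F, p = d * ∏ p ∈ F, (p - 1) + 1) : d < 2 ^ #F := by
  have hpos : 0 < ∏ p ∈ F, (p - 1) := prod_pos fun p hp => by have := hF p hp; omega
  refine Nat.lt_of_mul_lt_mul_right (a := ∏ p ∈ F, (p - 1)) ?_
  calc d * ∏ p ∈ F, (p - 1) < ∏ p ∈ F, p := by omega
    _ ≤ ∏ p ∈ F, 2 * (p - 1) := prod_le_prod' fun p hp => by have := hF p hp; omega
    _ = 2 ^ #F * ∏ p ∈ F, (p - 1) := by rw [prod_mul_distrib, prod_const]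

theorem sub_one_pow_card_mul_prod_le {S : Finset ℕ} {q : ℕ} (hS : ∀ p ∈ S, q ≤ p) :
    (q - 1) ^ #S * ∏ p ∈ S, p ≤ q ^ #S * ∏ p ∈ S, (p - 1) := by
  rw [← prod_const, ← prod_const, ← prod_mul_distrib, ← prod_mul_distrib]
  refine prod_le_prod' fun p hp => ?_
  rw [Nat.sub_one_mul, Nat.mul_sub_one, mul_comm q]
  exact Nat.sub_le_sub_left (hS p hp) _

theorem le_mul_card_mul_prod_of_prod_eq (hF : ∀ p ∈ F, 2 ≤ p) (hd : 2 ≤ d)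
    (hprod : ∏ p ∈ F, p = d * ∏ p ∈ F, (p - 1) + 1) {T : Finset ℕ} (hT : T ⊆ F) {q : ℕ}
    (hq : q ∈ F \ T) (hmin : ∀ p ∈ F \ T, q ≤ p) : q ≤ d * #F * ∏ p ∈ T, p := by
  set S := F \ T
  set s := #S
  set A := ∏ p ∈ T, p
  set B := ∏ p ∈ T, (p - 1)
  set x := ∏ p ∈ S, p
  set y := ∏ p ∈ S, (p - 1)
  have hS : ∀ p ∈ S, 2 ≤ p := fun p hp => hF p (mem_sdiff.mp hp).1
  have hB : 0 < B := prod_pos fun p hp => by have := hF p (hT hp); omega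
  have hx : 0 < x := prod_pos fun p hp => by have := hS p hp; omega
  have hyx : y < x := prod_lt_prod_of_nonempty (fun p hp => by have := hS p hp; omega)
    (fun p hp => by have := hS p hp; omega) ⟨q, hq⟩
  have hAx : A * x = d * B * y + 1 := by
    rw [mul_comm A, prod_sdiff hT, hprod, mul_assoc, mul_comm B, prod_sdiff hT]
  have hAB : A < d * B := by
    by_contra! h
    linarith [Nat.mul_le_mul_right x h, Nat.mul_le_mul_left (d * B) hyx, Nat.mul_le_mul hd hB]
  have hs : 0 < s := Finset.card_pos.mpr ⟨q, hq⟩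
  have hqs : q ^ s = q * q ^ (s - 1) := (mul_pow_sub_one hs.ne' q).symm
  have h1 : d * B * ((q - 1) ^ s * x) ≤ d * B * (q ^ s * y) :=
    Nat.mul_le_mul_left _ (sub_one_pow_card_mul_prod_le hmin)
  have h2 : d * B * x * q ^ s ≤ d * B * x * ((q - 1) ^ s + s * q ^ (s - 1)) :=
    Nat.mul_le_mul_left _ (pow_le_sub_one_pow_add q s)
  have h3 : (A + 1) * (q ^ s * x) ≤ d * B * (q ^ s * x) := Nat.mul_le_mul_right _ hAB
  have hq_lt : q * (q ^ (s - 1) * x) < d * B * s * (q ^ (s - 1) * x) := by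
    have h4 := congrArg (q ^ s * ·) hAx
    have hqs_pos : 0 < q ^ s := pow_pos (by have := hS q hq; omega) s
    rw [hqs] at h1 h2 h3 h4 hqs_pos
    linarith
  calc q ≤ d * B * s := (Nat.lt_of_mul_lt_mul_right hq_lt).le
    _ ≤ d * A * #F := by
      gcongr
      · exact prod_le_prod' fun p _ => Nat.sub_le p 1
      · exact card_le_card sdiff_subset
    _ = d * #F * A := by ring

theorem mul_prod_le_pow_of_prod_eq (hF : ∀ p ∈ F, 2 ≤ p) (hd : 2 ≤ d)
    (hprod : ∏ p ∈ F, p = d * ∏ p ∈ F, (p - 1) + 1) :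
    d * #F * ∏ p ∈ F, p ≤ (d * #F) ^ 2 ^ #F := by
  set K := d * #F
  suffices ∀ T ⊆ F, (∀ p ∈ T, ∀ q ∈ F \ T, p < q) → K * ∏ p ∈ T, p ≤ K ^ 2 ^ #T from
    this F subset_rfl (by simp)
  intro T
  induction T using Finset.induction_on_max with
  | empty => simp
  | insert a T ha ih =>
    intro hT hinit
    have haT : a ∉ T := fun h => (ha a h).false
    have hT' : T ⊆ F := (subset_insert a T).trans hT
    have hinit' : ∀ p ∈ T, ∀ q ∈ F \ T, p < q := by
      intro p hp q hq
      by_cases hqa : q = a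
      · exact hqa ▸ ha p hp
      · exact hinit p (mem_insert_of_mem hp) q (by simp_all)
    have hmin : ∀ p ∈ F \ T, a ≤ p := by
      intro p hp
      by_cases hpa : p = a
      · exact hpa.ge
      · exact (hinit a (mem_insert_self a T) p (by simp_all)).le
    have ha_le := le_mul_card_mul_prod_of_prod_eq hF hd hprod hT'
      (by simp [hT (mem_insert_self a T), haT]) hmin
    calc K * ∏ p ∈ insert a T, p = K * a * ∏ p ∈ T, p := by rw [prod_insert haT, ← mul_assoc]
      _ ≤ K * (K * ∏ p ∈ T, p) * ∏ p ∈ T, p := by gcongr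
      _ = (K * ∏ p ∈ T, p) ^ 2 := by ring
      _ ≤ (K ^ 2 ^ #T) ^ 2 := by gcongr; exact ih hT' hinit'
      _ = K ^ 2 ^ #(insert a T) := by rw [card_insert_of_notMem haT, ← pow_mul, pow_succ]

end LehmerEquation

theorem le_pow_of_totient_dvd_sub_one {m k : ℕ} (hm : 1 < m) (hprime : ¬ m.Prime)
    (h : φ m ∣ m - 1) (hk : #m.primeFactors ≤ k) : m ≤ (2 ^ k * k) ^ 2 ^ k := by
  have hsq := squarefree_of_totient_dvd_sub_one (by omega) h
  have hF : ∀ p ∈ m.primeFactors, 2 ≤ p := fun p hp => (prime_of_mem_primeFactors hp).two_le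
  obtain ⟨d, hd⟩ := h
  have hprod : ∏ p ∈ m.primeFactors, p = d * ∏ p ∈ m.primeFactors, (p - 1) + 1 := by
    rw [prod_primeFactors_of_squarefree hsq, ← totient_eq_prod_primeFactors_sub_one hsq,
      mul_comm d, ← hd]
    omega
  have hd2 : 2 ≤ d := by
    have hlt : φ m < m - 1 := lt_of_le_of_ne (le_sub_one_of_lt (totient_lt m hm))
      (mt (totient_eq_iff_prime (by omega)).mp hprime)
    by_contra! hd1
    interval_cases d <;> omega
  have hcard : 0 < #m.primeFactors := Finset.card_pos.mpr (nonempty_primeFactors.mpr hm)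
  have hK : d * #m.primeFactors ≤ 2 ^ k * k := Nat.mul_le_mul
    ((lt_two_pow_card_of_prod_eq hF hprod).le.trans (pow_le_pow_right₀ one_le_two hk)) hk
  calc m ≤ d * #m.primeFactors * m := Nat.le_mul_of_pos_left m (by positivity)
    _ ≤ (d * #m.primeFactors) ^ 2 ^ #m.primeFactors := by
      simpa only [prod_primeFactors_of_squarefree hsq] using
        mul_prod_le_pow_of_prod_eq hF hd2 hprod
    _ ≤ (2 ^ k * k) ^ 2 ^ k := by
      have : 1 ≤ 2 ^ k * k := Nat.mul_pos (by positivity) (by omega)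
      gcongr
      exact one_le_two

theorem odd_geom_sum_of_even {g n : ℕ} (hg : Even g) (hn : n ≠ 0) :
    Odd (∑ i ∈ range n, g ^ i) := by
  obtain ⟨n, rfl⟩ := exists_eq_succ_of_ne_zero hn
  rw [geom_sum_succ]
  exact (hg.mul_right _).add_one

theorem card_primeFactors_geom_sum_le_padicValNat {g n : ℕ} (hg : Even g) (hg0 : g ≠ 0)
    (hn : 2 ≤ n) (h : φ (∑ i ∈ range n, g ^ i) ∣ ∑ i ∈ range n, g ^ i - 1) :
    #(∑ i ∈ range n, g ^ i).primeFactors ≤ padicValNat 2 g := by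
  obtain ⟨n, rfl⟩ : ∃ n', n = n' + 1 := ⟨n - 1, by omega⟩
  have hodd := odd_geom_sum_of_even hg (n := n) (by omega)
  have h2 : 2 ^ #(∑ i ∈ range (n + 1), g ^ i).primeFactors ∣ g * ∑ i ∈ range n, g ^ i := by
    rw [← Nat.add_sub_cancel (g * _) 1, ← geom_sum_succ]
    exact (two_pow_card_primeFactors_dvd_totient
      (odd_geom_sum_of_even hg n.succ_ne_zero)).trans h
  rw [← padicValNat_dvd_iff_le hg0]
  exact (Nat.Coprime.pow_left _ (Nat.coprime_two_left.mpr hodd)).dvd_of_dvd_mul_right h2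

end Nat

theorem repunit_even_lehmer_finite_general (L : ℝ) :
    Set.Finite {p : ℕ × ℕ | 2 ≤ p.1 ∧ Even p.1 ∧ (padicValNat 2 p.1 : ℝ) ≤ L ∧
      0 < p.2 ∧ 1 < (p.1 ^ p.2 - 1) / (p.1 - 1) ∧
      ¬ ((p.1 ^ p.2 - 1) / (p.1 - 1)).Prime ∧
      ((p.1 ^ p.2 - 1) / (p.1 - 1)).totient ∣ (p.1 ^ p.2 - 1) / (p.1 - 1) - 1} := by
  set C := (2 ^ ⌊L⌋₊ * ⌊L⌋₊) ^ 2 ^ ⌊L⌋₊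
  refine (Set.finite_Iic (C, C)).subset ?_
  rintro ⟨g, n⟩ ⟨hg, hg_even, hval, -, hm, hprime, h⟩
  dsimp only at *
  rw [← Nat.geomSum_eq hg] at hm hprime h
  have hn : 2 ≤ n := by
    by_contra!
    interval_cases n <;> simp at hm
  have hmC : ∑ i ∈ range n, g ^ i ≤ C := Nat.le_pow_of_totient_dvd_sub_one hm hprime h
    ((Nat.card_primeFactors_geom_sum_le_padicValNat hg_even (by omega) hn h).trans
      (Nat.le_floor hval))
  have hgm : g + 1 ≤ ∑ i ∈ range n, g ^ i := by
    simpa using sum_le_sum_of_subset (f := (g ^ ·)) (range_subset_range.mpr hn)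
  have hnm : n ≤ ∑ i ∈ range n, g ^ i := by
    simpa using card_nsmul_le_sum (range n) (g ^ ·) 1 fun i _ => Nat.one_le_pow _ _ (by omega)
  exact ⟨by omega, by omega⟩

theorem repunit_even_lehmer_finite (L : ℝ) (hL : 1 ≤ L) :
    Set.Finite {p : ℕ × ℕ | 2 ≤ p.1 ∧ Even p.1 ∧ (padicValNat 2 p.1 : ℝ) ≤ L ∧
      0 < p.2 ∧ 1 < (p.1 ^ p.2 - 1) / (p.1 - 1) ∧
      ¬ ((p.1 ^ p.2 - 1) / (p.1 - 1)).Prime ∧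
      ((p.1 ^ p.2 - 1) / (p.1 - 1)).totient ∣ (p.1 ^ p.2 - 1) / (p.1 - 1) - 1} :=
  repunit_even_lehmer_finite_general L
end

section
/- Let g be an odd integer with g > 1 and n ≥ 2, and set b = (g^n - 1)/(g - 1). Suppose b is composite with φ(b) dividing b - 1, and let K be the number of distinct prime divisors of b. Then K ≤ ν₂(g + 1) + ν₂(n - 1) - 1. -/
/-!
Write `b = 1 + g + ⋯ + g ^ (n - 1) = g * s + 1` with `s = 1 + g + ⋯ + g ^ (n - 2)`.
Every odd prime `p ∣ b` contributes an even factor `p - 1` to `φ b`, so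
`2 ^ K ∣ φ b ∣ b - 1 = g * s`. Since `φ b` is even, `b` is odd, which forces `n - 1` to be
even; lifting the exponent then gives `ν₂ s = ν₂ (g + 1) + ν₂ (n - 1) - 1`, and
`ν₂ (g * s) = ν₂ s` because `g` is odd.
-/

open Finset

theorem Nat.two_pow_card_primeFactors_dvd_totient_s14 {m : ℕ} (hm : Odd m) :
    2 ^ m.primeFactors.card ∣ m.totient := by
  rw [Nat.totient_eq_prod_factorization (by rintro rfl; simp at hm), Finsupp.prod,
    Nat.support_factorization, ← prod_const]
  refine prod_dvd_prod_of_dvd _ _ fun p hp => Dvd.dvd.mul_left ?_ _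
  have hp_odd : Odd p := hm.of_dvd_nat (Nat.dvd_of_mem_primeFactors hp)
  exact (Nat.Odd.sub_odd hp_odd odd_one).two_dvd

theorem Nat.even_geom_sum_iff {g : ℕ} (hg : Odd g) {n : ℕ} :
    Even (∑ i ∈ range n, g ^ i) ↔ Even n := by
  induction n with
  | zero => simp
  | succ n ih =>
    simp [geom_sum_succ', Nat.even_add, ih, Nat.even_add_one, Nat.not_even_iff_odd.mpr hg.pow]

theorem padicValNat_two_geom_sum {g m : ℕ} (hg : Odd g) (hm : Even m) (hm0 : m ≠ 0) :
    padicValNat 2 (∑ i ∈ range m, g ^ i) = padicValNat 2 (g + 1) + padicValNat 2 m - 1 := by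
  obtain rfl | hg1 := (Nat.succ_le_of_lt hg.pos).eq_or_lt
  · simp
  · have hsum : (∑ i ∈ range m, g ^ i) * (g - 1) = g ^ m - 1 := geom_sum_mul_of_one_le hg.pos m
    have hlte := padicValNat.pow_two_sub_one hg1 hg.not_two_dvd_nat hm0 hm
    rw [← hsum, padicValNat.mul (geom_sum_pos g.zero_le hm0).ne' (by omega)] at hlte
    omega

theorem repunit_odd_factor_bound_general (g n : ℕ) (hodd : Odd g) (h1 : 1 < g) (hn : 2 ≤ n)
    (hdvd : ((g ^ n - 1) / (g - 1)).totient ∣ (g ^ n - 1) / (g - 1) - 1) :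
    ((g ^ n - 1) / (g - 1)).primeFactors.card ≤
      padicValNat 2 (g + 1) + padicValNat 2 (n - 1) - 1 := by
  obtain ⟨m, rfl⟩ : ∃ m, n = m + 1 := ⟨n - 1, by omega⟩
  have hm0 : m ≠ 0 := by omega
  set s := ∑ i ∈ range m, g ^ i
  have hb : (g ^ (m + 1) - 1) / (g - 1) = g * s + 1 := by rw [← Nat.geomSum_eq h1, geom_sum_succ]
  have hs : 0 < s := geom_sum_pos g.zero_le hm0
  rw [hb, add_tsub_cancel_right] at hdvd ⊢
  have hgs_even : Even (g * s) :=
    even_iff_two_dvd.mpr ((Nat.totient_even (by nlinarith)).two_dvd.trans hdvd)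
  have hm_even : Even m := (Nat.even_geom_sum_iff hodd).mp
    ((Nat.even_mul.mp hgs_even).resolve_left (Nat.not_even_iff_odd.mpr hodd))
  have hb_odd : Odd (g * s + 1) := hgs_even.add_one
  calc (g * s + 1).primeFactors.card
      ≤ padicValNat 2 (g * s) := (padicValNat_dvd_iff_le (by positivity)).mp
        ((Nat.two_pow_card_primeFactors_dvd_totient_s14 hb_odd).trans hdvd)
    _ = padicValNat 2 s := by
        rw [padicValNat.mul (by omega) hs.ne', padicValNat.eq_zero_of_not_dvd hodd.not_two_dvd_nat,
          zero_add]
    _ = padicValNat 2 (g + 1) + padicValNat 2 m - 1 :=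
        padicValNat_two_geom_sum hodd hm_even hm0

theorem repunit_odd_factor_bound (g n : ℕ) (hodd : Odd g) (h1 : 1 < g) (hn : 2 ≤ n)
    (hcomp : ¬ ((g ^ n - 1) / (g - 1)).Prime) (hb1 : 1 < (g ^ n - 1) / (g - 1))
    (hdvd : ((g ^ n - 1) / (g - 1)).totient ∣ (g ^ n - 1) / (g - 1) - 1) :
    ((g ^ n - 1) / (g - 1)).primeFactors.card ≤
      padicValNat 2 (g + 1) + padicValNat 2 (n - 1) - 1 :=
  repunit_odd_factor_bound_general g n hodd h1 hn hdvd
end
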